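/- Let K be a real closed field with compatible valuation into ℝ, extended to K[i]. Suppose a tropical plane curve C (the tropicalization of a smooth plane quartic X) and a tropical line T = Trop(L) intersect so that the stable intersection multiplicities along the connected components of C ∩ T sum to 4, and each geometric intersection point of X and L over K[i] has a Galois conjugate with the same tropicalization. Then the tropical intersection multiplicity along each connected component of C ∩ T is even (equal to 2 or 4). -/
import Mathlib

/-- A finset closed under a fixed-point-free involution has even cardinality. -/
lemma even_card_of_involution {α : Type*} [DecidableEq α] (f : α → α)
    (hinv : ∀ x, f (f x) = x) (hnf : ∀ x, f x ≠ x) :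
    ∀ s : Finset α, (∀ x ∈ s, f x ∈ s) → Even s.card := by
  intro s
  induction s using Finset.strongInduction with
  | _ s ih =>
    intro hcl
    rcases s.eq_empty_or_nonempty with rfl | ⟨a, ha⟩
    · simp
    · have hfa : f a ∈ s := hcl a ha
      have h2 : ({a, f a} : Finset α) ⊆ s := by
        intro x hx
        simp only [Finset.mem_insert, Finset.mem_singleton] at hx
        rcases hx with rfl | rfl
        · exact ha
        · exact hfa
      have hc2 : ({a, f a} : Finset α).card = 2 := by
        rw [Finset.card_insert_of_notMem (by simp [Ne.symm (hnf a)]),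
          Finset.card_singleton]
      set s' := s \ {a, f a} with hs'
      have hsub : s' ⊂ s :=
        Finset.sdiff_ssubset h2 ⟨a, by simp⟩
      have hcl' : ∀ x ∈ s', f x ∈ s' := by
        intro x hx
        simp only [hs', Finset.mem_sdiff, Finset.mem_insert, Finset.mem_singleton,
          not_or] at hx ⊢
        refine ⟨hcl x hx.1, ?_, ?_⟩
        · intro h; exact hx.2.2 (by rw [← h, hinv])
        · intro h
          exact hx.2.1 (by have := congrArg f h; rwa [hinv, hinv] at this)
      have hle2 : 2 ≤ s.card := hc2 ▸ Finset.card_le_card h2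
      have hcard : s.card = s'.card + 2 := by
        have := Finset.card_sdiff_of_subset h2
        rw [hc2, ← hs'] at this
        omega
      rw [hcard]
      exact (ih s' hsub hcl').add (by norm_num)

/-- Suppose a tropical plane quartic `C` and a tropical line `T` intersect with stable
intersection multiplicities along the connected components of `C ∩ T` (indexed by `ι`)
summing to `4`, where by the Osserman–Rabinoff correspondence the multiplicity `m i` of
a component equals the number of geometric intersection points of `X` and `L`
tropicalizing into it, and each geometric intersection point has a (distinct) Galois
conjugate with the same tropicalization. Then the multiplicity along each component is
even: it equals `2` or `4`. -/
theorem tropical_multiplicity_even {ι : Type*} [Fintype ι]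
    (pts : Type*) [Fintype pts] (hcard : Fintype.card pts = 4)
    (σ : pts ≃ pts) (hinvol : ∀ x, σ (σ x) = x) (hnofix : ∀ x, σ x ≠ x)
    (t : pts → ι) (hconj : ∀ x, t (σ x) = t x)
    (m : ι → ℕ) (hm : ∀ i, m i = Nat.card {x : pts // t x = i})
    (hsum : ∑ i, m i = 4)
    (hpos : ∀ i, 1 ≤ m i) :
    ∀ i, Even (m i) ∧ (m i = 2 ∨ m i = 4) := by
  classical
  intro i
  have heven : Even (m i) := by
    rw [hm i, Nat.card_eq_fintype_card, Fintype.card_subtype]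
    refine even_card_of_involution σ hinvol hnofix _ ?_
    intro x hx
    simp only [Finset.mem_filter, Finset.mem_univ, true_and] at hx ⊢
    rw [hconj, hx]
  have hle : m i ≤ 4 := by
    rw [← hsum]
    exact Finset.single_le_sum (fun j _ => Nat.zero_le _) (Finset.mem_univ i)
  have h1 := hpos i
  refine ⟨heven, ?_⟩
  rcases heven with ⟨k, hk⟩
  omega
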